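/- arXiv:2106.06869 — 5 statements merged into one kernel-verified Lean document; each statement's English description precedes it below -/
import Mathlib

section
/- Let r = p₁/p₂ ∈ ℂ(y) where p₁, p₂ ∈ ℂ[y] are coprime polynomials with deg p₁ > deg p₂. If some nonconstant polynomial h ∈ ℂ[y] belongs to the subfield ℂ(r) of ℂ(y), then p₂ is a nonzero constant, i.e. r is (up to a constant factor) a polynomial. -/
/-!
Write `h = f(r) / g(r)` with `r = p / q`. Clearing denominators with
`F = homogenizedEval f p q = q ^ deg f * f(p / q)` and similarly `G` turns this into the polynomial
identity `h * G * q ^ deg f = F * q ^ deg g`. As `deg q < deg p`, the term `lc(f) * p ^ deg f`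
dominates `F`, so `deg F = deg f * deg p` (likewise for `G`), and comparing degrees forces
`deg g < deg f`. Then `q ∣ F ≡ lc(f) * p ^ deg f (mod q)`, and since `p` and `q` are coprime,
`q` is a unit.
-/

open Polynomial

namespace Polynomial

variable {R : Type*} [CommRing R]

noncomputable def homogenizedEval (f p q : R[X]) : R[X] :=
  ((f.map C).scaleRoots q).eval p

theorem coeff_map_C_scaleRoots (f q : R[X]) (i : ℕ) :
    ((f.map C).scaleRoots q).coeff i = C (f.coeff i) * q ^ (f.natDegree - i) := by
  rw [coeff_scaleRoots, coeff_map, natDegree_map_eq_of_injective C_injective]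

theorem homogenizedEval_eq_sum (f p q : R[X]) :
    homogenizedEval f p q =
      ∑ i ∈ Finset.range (f.natDegree + 1), C (f.coeff i) * q ^ (f.natDegree - i) * p ^ i := by
  rw [homogenizedEval, eval_eq_sum_range, natDegree_scaleRoots,
    natDegree_map_eq_of_injective C_injective]
  simp only [coeff_map_C_scaleRoots]

theorem algebraMap_homogenizedEval {L : Type*} [CommRing L] [Algebra R L] [Algebra R[X] L]
    [IsScalarTower R R[X] L] (f : R[X]) {p q : R[X]} {r : L}
    (hr : algebraMap R[X] L p = algebraMap R[X] L q * r) :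
    algebraMap R[X] L (homogenizedEval f p q) = algebraMap R[X] L q ^ f.natDegree * aeval r f := by
  rw [homogenizedEval, ← eval₂_hom, hr, scaleRoots_eval₂_mul, eval₂_map,
    natDegree_map_eq_of_injective C_injective, aeval_def, IsScalarTower.algebraMap_eq R R[X] L]
  rfl

theorem dvd_C_leadingCoeff_mul_pow_of_dvd_homogenizedEval {f p q : R[X]}
    (hdvd : q ∣ homogenizedEval f p q) : q ∣ C f.leadingCoeff * p ^ f.natDegree := by
  have key := dvd_term_of_dvd_eval_of_dvd_terms f.natDegree hdvd fun j hj => by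
    rcases lt_or_gt_of_ne hj with hlt | hgt
    · rw [coeff_map_C_scaleRoots]
      exact ((dvd_pow_self q (Nat.sub_pos_of_lt hlt).ne').mul_left _).mul_right _
    · simp only [coeff_map_C_scaleRoots, coeff_eq_zero_of_natDegree_lt hgt, map_zero, zero_mul,
        dvd_zero]
  rwa [coeff_map_C_scaleRoots, Nat.sub_self, pow_zero, mul_one] at key

theorem natDegree_homogenizedEval_term_lt {f p q : R[X]} (hdeg : q.natDegree < p.natDegree)
    {i : ℕ} (hi : i < f.natDegree) :
    (C (f.coeff i) * q ^ (f.natDegree - i) * p ^ i).natDegree < f.natDegree * p.natDegree :=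
  calc (C (f.coeff i) * q ^ (f.natDegree - i) * p ^ i).natDegree
      ≤ (f.natDegree - i) * q.natDegree + i * p.natDegree :=
        natDegree_mul_le.trans <|
          add_le_add ((natDegree_C_mul_le _ _).trans natDegree_pow_le) natDegree_pow_le
    _ < (f.natDegree - i) * p.natDegree + i * p.natDegree :=
        Nat.add_lt_add_right (Nat.mul_lt_mul_of_pos_left hdeg (Nat.sub_pos_of_lt hi)) _
    _ = f.natDegree * p.natDegree := by rw [← add_mul, Nat.sub_add_cancel hi.le]

theorem degree_homogenizedEval [IsDomain R] {f p q : R[X]} (hf : f ≠ 0)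
    (hdeg : q.natDegree < p.natDegree) :
    (homogenizedEval f p q).degree = (f.natDegree * p.natDegree : ℕ) := by
  have hp : p ≠ 0 := ne_zero_of_natDegree_gt hdeg
  have hlead : (C f.leadingCoeff * p ^ f.natDegree).degree = (f.natDegree * p.natDegree : ℕ) := by
    rw [degree_eq_natDegree (mul_ne_zero (by simpa using hf) (pow_ne_zero _ hp)),
      natDegree_C_mul (leadingCoeff_ne_zero.2 hf), natDegree_pow]
  have hrest : (∑ i ∈ Finset.range f.natDegree,
      C (f.coeff i) * q ^ (f.natDegree - i) * p ^ i).degree < (f.natDegree * p.natDegree : ℕ) :=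
    (degree_sum_le _ _).trans_lt <| (Finset.sup_lt_iff (WithBot.bot_lt_coe _)).2 fun i hi =>
      degree_le_natDegree.trans_lt <|
        WithBot.coe_lt_coe.2 (natDegree_homogenizedEval_term_lt hdeg (Finset.mem_range.1 hi))
  rw [homogenizedEval_eq_sum, Finset.sum_range_succ, Nat.sub_self, pow_zero, mul_one,
    coeff_natDegree, degree_add_eq_right_of_degree_lt (hlead ▸ hrest), hlead]

theorem natDegree_lt_of_mul_homogenizedEval_eq [IsDomain R] {f g p q h : R[X]} (hf : f ≠ 0)
    (hg : g ≠ 0) (hq : q ≠ 0) (hdeg : q.natDegree < p.natDegree) (hh : 0 < h.natDegree)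
    (heq : h * homogenizedEval g p q * q ^ f.natDegree = homogenizedEval f p q * q ^ g.natDegree) :
    g.natDegree < f.natDegree := by
  have hF := degree_homogenizedEval hf hdeg
  have hG := degree_homogenizedEval hg hdeg
  have hF0 : homogenizedEval f p q ≠ 0 := ne_zero_of_coe_le_degree hF.ge
  have hG0 : homogenizedEval g p q ≠ 0 := ne_zero_of_coe_le_degree hG.ge
  have hdeg_eq := congrArg natDegree heq
  rw [natDegree_mul (mul_ne_zero (ne_zero_of_natDegree_gt hh) hG0) (pow_ne_zero _ hq),
    natDegree_mul (ne_zero_of_natDegree_gt hh) hG0, natDegree_mul hF0 (pow_ne_zero _ hq),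
    natDegree_pow, natDegree_pow, natDegree_eq_of_degree_eq_some hF,
    natDegree_eq_of_degree_eq_some hG] at hdeg_eq
  by_contra! hle
  nlinarith [Nat.mul_le_mul hle hdeg.le]

end Polynomial

open IntermediateField

namespace RatFunc

variable {K : Type*} [Field K]

theorem natDegree_eq_zero_of_algebraMap_mem_bot {h : K[X]}
    (hh : algebraMap K[X] (RatFunc K) h ∈ (⊥ : IntermediateField K (RatFunc K))) :
    h.natDegree = 0 := by
  obtain ⟨c, hc⟩ := mem_bot.1 hh
  rw [IsScalarTower.algebraMap_apply K K[X] (RatFunc K)] at hc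
  rw [← algebraMap_injective K hc]
  exact natDegree_C c

theorem exists_mul_homogenizedEval_eq_of_mem_adjoin_div {p q h : K[X]} (hq : q ≠ 0) (hh : h ≠ 0)
    (hmem : algebraMap K[X] (RatFunc K) h ∈
      K⟮algebraMap K[X] (RatFunc K) p / algebraMap K[X] (RatFunc K) q⟯) :
    ∃ f g : K[X], f ≠ 0 ∧ g ≠ 0 ∧
      h * homogenizedEval g p q * q ^ f.natDegree = homogenizedEval f p q * q ^ g.natDegree := by
  set φ := algebraMap K[X] (RatFunc K)
  set r := φ p / φ q
  have hr : φ p = φ q * r := (mul_div_cancel₀ _ (algebraMap_ne_zero hq)).symm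
  obtain ⟨f, g, hfg⟩ := (mem_adjoin_simple_iff K _).1 hmem
  have hφh : φ h ≠ 0 := algebraMap_ne_zero hh
  have hf : aeval r f ≠ 0 := fun h0 => hφh (by rw [hfg, h0, zero_div])
  have hg : aeval r g ≠ 0 := fun h0 => hφh (by rw [hfg, h0, div_zero])
  refine ⟨f, g, fun h0 => hf (by rw [h0, map_zero]), fun h0 => hg (by rw [h0, map_zero]),
    algebraMap_injective K ?_⟩
  simp only [map_mul, map_pow, algebraMap_homogenizedEval _ hr]
  rw [hfg]
  field_simp

theorem isUnit_of_algebraMap_mem_adjoin_div {p q h : K[X]} (hcop : IsCoprime p q)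
    (hdeg : q.degree < p.degree) (hh : 0 < h.natDegree)
    (hmem : algebraMap K[X] (RatFunc K) h ∈
      K⟮algebraMap K[X] (RatFunc K) p / algebraMap K[X] (RatFunc K) q⟯) :
    IsUnit q := by
  have hq : q ≠ 0 := by
    rintro rfl
    rw [map_zero, div_zero, adjoin_zero] at hmem
    exact hh.ne' (natDegree_eq_zero_of_algebraMap_mem_bot hmem)
  have hnatDeg := natDegree_lt_natDegree hq hdeg
  obtain ⟨f, g, hf, hg, heq⟩ :=
    exists_mul_homogenizedEval_eq_of_mem_adjoin_div hq (ne_zero_of_natDegree_gt hh) hmem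
  have hlt := natDegree_lt_of_mul_homogenizedEval_eq hf hg hq hnatDeg hh heq
  have hdvd : q ∣ homogenizedEval f p q := by
    refine (mul_dvd_mul_iff_right (pow_ne_zero g.natDegree hq)).1 ?_
    rw [← pow_succ', ← heq]
    exact (pow_dvd_pow q hlt).mul_left _
  have hdvd_lead : q ∣ Polynomial.C f.leadingCoeff :=
    hcop.pow_left.symm.dvd_of_dvd_mul_right (dvd_C_leadingCoeff_mul_pow_of_dvd_homogenizedEval hdvd)
  exact isUnit_of_dvd_unit hdvd_lead (isUnit_C.2 (leadingCoeff_ne_zero.2 hf).isUnit)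

end RatFunc

/-- Let `r = p₁/p₂ ∈ ℂ(y)` where `p₁, p₂ ∈ ℂ[y]` are coprime polynomials with
`deg p₁ > deg p₂`.  If some nonconstant polynomial `h ∈ ℂ[y]` belongs to the subfield
`ℂ(r)` of `ℂ(y)` generated by `r` over `ℂ`, then `p₂` is a nonzero constant, i.e. `r`
is (up to a constant factor) a polynomial. -/
theorem polynomial_in_C_r_implies_r_polynomial (p₁ p₂ : Polynomial ℂ)
    (hcop : IsCoprime p₁ p₂) (hdeg : p₂.degree < p₁.degree)
    (h : Polynomial ℂ) (hh : 0 < h.natDegree)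
    (hmem : algebraMap (Polynomial ℂ) (RatFunc ℂ) h ∈
      IntermediateField.adjoin ℂ
        {algebraMap (Polynomial ℂ) (RatFunc ℂ) p₁ / algebraMap (Polynomial ℂ) (RatFunc ℂ) p₂}) :
    ∃ c : ℂ, c ≠ 0 ∧ p₂ = Polynomial.C c := by
  obtain ⟨c, hc, hp₂⟩ :=
    Polynomial.isUnit_iff.1 (RatFunc.isUnit_of_algebraMap_mem_adjoin_div hcop hdeg hh hmem)
  exact ⟨c, hc.ne_zero, hp₂.symm⟩
end

section
/- Let f ∈ ℂ[x,y] with n = deg_y f ≥ 1. Then ℂ(x,y) is a finite algebraic extension of its subfield ℂ(x,f) generated by x and f, and the degree of this extension equals n: [ℂ(x,y) : ℂ(x,f)] = deg_y f. -/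
/-!
Over `K = ℂ(x)` the variable `y` is transcendental and `ℂ(x,y) = K(y) ≅ K(Y)`, while `f`, read
as a polynomial `p ∈ K[Y]` of degree `deg_y f`, gives `ℂ(x,f) = K(p(y))`. For a nonconstant
rational function `r ∈ K(Y)` one has `[K(Y) : K(r)] = max (deg (num r)) (deg (denom r))`, because
`num r(T) - r · denom r(T)` is irreducible over `K(r)`; for `r = p` this is `deg p`.
-/

open IntermediateField

section

open Polynomial

theorem IntermediateField.comap_symm_eq_map {K L L' : Type*} [Field K] [Field L] [Field L']
    [Algebra K L] [Algebra K L'] (e : L ≃ₐ[K] L') (A : IntermediateField K L) :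
    A.comap (e.symm : L' →ₐ[K] L) = A.map (e : L →ₐ[K] L') := by
  ext z
  constructor
  · exact fun hz ↦ ⟨_, hz, e.apply_symm_apply z⟩
  · rintro ⟨w, hw, rfl⟩
    change e.symm (e w) ∈ A
    simpa using hw

theorem IntermediateField.finrank_adjoin_aeval_eq_natDegree {K L : Type*} [Field K] [Field L]
    [Algebra K L] {y : L} (hy : Transcendental K y) (hgen : K⟮y⟯ = ⊤) (p : K[X]) :
    Module.finrank K⟮aeval y p⟯ L = p.natDegree := by
  let e : RatFunc K ≃ₐ[K] L :=
    (RatFunc.algEquivOfTranscendental y hy).trans ((equivOfEq hgen).trans topEquiv)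
  have he : K⟮aeval y p⟯ =
      K⟮(algebraMap K[X] (RatFunc K) p)⟯.comap (e.symm : L →ₐ[K] RatFunc K) := by
    have hep : e (algebraMap K[X] (RatFunc K) p) = aeval y p := by simp [e]
    rw [comap_symm_eq_map, adjoin_map, Set.image_singleton, AlgEquiv.coe_toAlgHom, hep]
  rw [he, finrank_comap, AlgEquiv.fieldRange_eq_top, relfinrank_top_right,
    RatFunc.finrank_eq_max_natDegree, RatFunc.num_algebraMap, RatFunc.denom_algebraMap,
    natDegree_one, max_eq_left (Nat.zero_le _)]

namespace AlgebraicIndependent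

variable {k σ L : Type*} [Field k] [Field L] [Algebra k L] {v : σ → L}

theorem exists_aeval_eq_natDegree_eq_degreeOf (hv : AlgebraicIndependent k v) (a : σ)
    (f : MvPolynomial σ k) :
    ∃ p : (adjoin k (v '' {a}ᶜ))[X],
      p.natDegree = f.degreeOf a ∧ aeval (v a) p = MvPolynomial.aeval v f := by
  classical
  set K := adjoin k (v '' {a}ᶜ)
  let φ : MvPolynomial {b // b ≠ a} k →ₐ[k] K :=
    MvPolynomial.aeval fun b ↦ ⟨v b, subset_adjoin _ _ ⟨b, b.2, rfl⟩⟩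
  have hφ : Function.Injective (φ : MvPolynomial {b // b ≠ a} k →+* K) := by
    have : K.val.comp φ = MvPolynomial.aeval (v ∘ Subtype.val) := by
      ext; simp [φ]
    refine .of_comp (f := K.val) ?_
    change Function.Injective (K.val.comp φ)
    exact this ▸ hv.comp _ Subtype.val_injective
  -- `f` as a polynomial in `X a` whose coefficients involve only the other variables
  refine ⟨(MvPolynomial.optionEquivLeft k _
    (MvPolynomial.rename (Equiv.optionSubtypeNe a).symm f)).map φ, ?_, ?_⟩
  · rw [MvPolynomial.degreeOf_eq_natDegree a f]
    exact natDegree_map_eq_of_injective hφ _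
  · have : ((aeval (v a)).restrictScalars k).comp ((mapAlgHom φ).comp
        ((MvPolynomial.optionEquivLeft k _).toAlgHom.comp
          (MvPolynomial.rename (Equiv.optionSubtypeNe a).symm))) = MvPolynomial.aeval v := by
      ext i
      by_cases hi : i = a
      · subst hi; simp
      · simp [hi, φ]
    exact congr($this f)

theorem finrank_adjoin_aeval_eq_degreeOf (hv : AlgebraicIndependent k v)
    (hgen : adjoin k (Set.range v) = ⊤) (a : σ) (f : MvPolynomial σ k) :
    Module.finrank (adjoin k (v '' {a}ᶜ ∪ {MvPolynomial.aeval v f})) L = f.degreeOf a := by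
  obtain ⟨p, hdeg, hp⟩ := hv.exists_aeval_eq_natDegree_eq_degreeOf a f
  have htr : Transcendental (adjoin k (v '' {a}ᶜ)) (v a) :=
    IntermediateField.transcendental_adjoin_iff.2
      (hv.transcendental_adjoin (Set.notMem_compl_iff.2 rfl))
  have htop : (adjoin k (v '' {a}ᶜ))⟮v a⟯ = ⊤ := by
    rw [← restrictScalars_eq_top_iff (K := k), adjoin_adjoin_left, ← Set.image_singleton,
      ← Set.image_union, Set.compl_union_self, Set.image_univ, hgen]
  rw [← adjoin_adjoin_left, ← hp, ← hdeg]
  exact finrank_adjoin_aeval_eq_natDegree htr htop p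

end AlgebraicIndependent

end

namespace MvPolynomial

theorem aeval_algebraMap_X {R S σ : Type*} [CommSemiring R] [CommSemiring S]
    [Algebra R S] [Algebra (MvPolynomial σ R) S] [IsScalarTower R (MvPolynomial σ R) S] :
    aeval (fun i ↦ algebraMap (MvPolynomial σ R) S (X i)) =
      IsScalarTower.toAlgHom R (MvPolynomial σ R) S :=
  algHom_ext fun i ↦ by simp

variable {k σ L : Type*} [Field k] [Field L] [Algebra k L]
  [Algebra (MvPolynomial σ k) L] [IsScalarTower k (MvPolynomial σ k) L]
  [IsFractionRing (MvPolynomial σ k) L]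

theorem algebraicIndependent_algebraMap_X :
    AlgebraicIndependent k fun i ↦ algebraMap (MvPolynomial σ k) L (X i) :=
  (algebraicIndependent_X σ k).map'
    (f := IsScalarTower.toAlgHom k (MvPolynomial σ k) L) (IsFractionRing.injective _ _)

theorem adjoin_range_algebraMap_X :
    adjoin k (Set.range fun i ↦ algebraMap (MvPolynomial σ k) L (X i)) = ⊤ := by
  rw [← IsFractionRing.algHom_fieldRange_eq_of_comp_eq_of_range_eq (f := AlgHom.id k L)
    (g := IsScalarTower.toAlgHom k (MvPolynomial σ k) L) rfl
    (by rw [Algebra.adjoin_range_eq_range_aeval, aeval_algebraMap_X])]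
  exact AlgHom.fieldRange_eq_top.2 Function.surjective_id

theorem finrank_adjoin_algebraMap_eq_degreeOf (a : σ) (f : MvPolynomial σ k) :
    Module.finrank (adjoin k ((fun i ↦ algebraMap (MvPolynomial σ k) L (X i)) '' {a}ᶜ ∪
      {algebraMap (MvPolynomial σ k) L f})) L = f.degreeOf a := by
  have hf : algebraMap (MvPolynomial σ k) L f =
      aeval (fun i ↦ algebraMap (MvPolynomial σ k) L (X i)) f := by
    rw [aeval_algebraMap_X]; rfl
  rw [hf]
  exact algebraicIndependent_algebraMap_X.finrank_adjoin_aeval_eq_degreeOf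
    adjoin_range_algebraMap_X a f

end MvPolynomial

open MvPolynomial

/-- Let `f ∈ ℂ[x,y]` with `n = deg_y f ≥ 1`.  Then `ℂ(x,y)` is a finite algebraic
extension of its subfield `ℂ(x,f)` generated over `ℂ` by `x` and `f`, and
`[ℂ(x,y) : ℂ(x,f)] = deg_y f`.  Here `ℂ(x,y)` is the fraction field of `ℂ[x,y]`
(variable `0` is `x`, variable `1` is `y`), and `deg_y f` is `f.degreeOf 1`. -/
theorem degree_over_C_x_f_eq_degy (f : MvPolynomial (Fin 2) ℂ)
    (hf : 1 ≤ f.degreeOf 1) :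
    FiniteDimensional
      (↥(IntermediateField.adjoin ℂ
        ({algebraMap (MvPolynomial (Fin 2) ℂ) (FractionRing (MvPolynomial (Fin 2) ℂ)) (X 0),
          algebraMap (MvPolynomial (Fin 2) ℂ) (FractionRing (MvPolynomial (Fin 2) ℂ)) f} :
          Set (FractionRing (MvPolynomial (Fin 2) ℂ)))))
      (FractionRing (MvPolynomial (Fin 2) ℂ)) ∧
    Module.finrank
      (↥(IntermediateField.adjoin ℂ
        ({algebraMap (MvPolynomial (Fin 2) ℂ) (FractionRing (MvPolynomial (Fin 2) ℂ)) (X 0),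
          algebraMap (MvPolynomial (Fin 2) ℂ) (FractionRing (MvPolynomial (Fin 2) ℂ)) f} :
          Set (FractionRing (MvPolynomial (Fin 2) ℂ)))))
      (FractionRing (MvPolynomial (Fin 2) ℂ)) = f.degreeOf 1 := by
  have hcompl : ({1}ᶜ : Set (Fin 2)) = {0} := by
    ext i; fin_cases i <;> simp
  have hrank := finrank_adjoin_algebraMap_eq_degreeOf
    (L := FractionRing (MvPolynomial (Fin 2) ℂ)) 1 f
  rw [hcompl, Set.image_singleton, Set.singleton_union] at hrank
  exact ⟨Module.finite_of_finrank_pos (hrank ▸ hf), hrank⟩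
end

section
/- Lemma on radical: Let L = ℂ[x, x^{-1}] and let A be the algebra of asymptotic series a = Σ_{i ≤ k} a_i y^i with coefficients a_i ∈ L and only finitely many positive powers of y (formal Laurent series in y^{-1} over L). Suppose a ∈ A is nonzero with leading term |a| = c x^l y^k, where c ∈ ℂ*, l ∈ ℤ, k ∈ ℤ (i.e. the top coefficient a_k equals the monomial c x^l). Let r = p/q ∈ ℚ with q ≥ 1 and gcd(p,q) = 1, and suppose r·l ∈ ℤ and r·k ∈ ℤ (i.e. |a|^r ∈ A). Then there exists b ∈ A with b^q = a^p and leading term |b| = c' x^{rl} y^{rk} for some c' ∈ ℂ with c'^q = c^p. -/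
/-!
Divide `a` by its leading monomial `m = c xˡ y^k`: then `a = m (1 + u)` with `u` of negative
`y`-order, so the binomial series `(1 + u) ^ (p/q) = Σ (p/q choose n) uⁿ` converges in `A`. A
`q`-th root of `mᵖ` is the monomial `c' x^(rl) y^(rk)`, and `b = c' x^(rl) y^(rk) (1 + u) ^ (p/q)`
has the required leading term because `(1 + u) ^ (p/q)` starts with `1`.
-/

/-- `b ^ q = a ^ p`, stated without inverses so that it makes sense in a monoid for `p < 0`. -/
def IsRatPow {M : Type*} [Monoid M] (b a : M) (p : ℤ) (q : ℕ) : Prop :=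
  b ^ q * a ^ (-p).toNat = a ^ p.toNat

theorem IsRatPow.mul {M : Type*} [CommMonoid M] {b a b' a' : M} {p : ℤ} {q : ℕ}
    (h : IsRatPow b a p q) (h' : IsRatPow b' a' p q) : IsRatPow (b * b') (a * a') p q := by
  unfold IsRatPow at *
  rw [mul_pow, mul_pow, mul_pow, mul_mul_mul_comm, h, h']

namespace HahnSeries

section BinomialPow

open PowerSeries

variable {Γ R 𝕜 : Type*} [AddCommMonoid Γ] [LinearOrder Γ] [IsOrderedCancelAddMonoid Γ]
  [CommRing R] [CommRing 𝕜] [BinomialRing 𝕜] [Algebra 𝕜 R]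

/-- `(1 + u) ^ r` as the sum of the binomial series; it is the junk value `1` unless
`0 < u.orderTop`, since otherwise `heval u` sends `X` to `0`. -/
noncomputable def binomialPow (u : R⟦Γ⟧) (r : 𝕜) : R⟦Γ⟧ :=
  heval u (binomialSeries R r)

variable {u : R⟦Γ⟧}

theorem binomialPow_add (r s : 𝕜) :
    u.binomialPow (r + s) = u.binomialPow r * u.binomialPow s := by
  rw [binomialPow, binomialSeries_add, map_mul]; rfl

theorem binomialPow_natCast (hu : 0 < u.orderTop) (n : ℕ) :
    u.binomialPow (n : 𝕜) = (1 + u) ^ n := by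
  rw [binomialPow, binomialSeries_nat, map_pow, map_add, map_one, heval_X u hu]

theorem binomialPow_pow (r : 𝕜) (n : ℕ) : u.binomialPow r ^ n = u.binomialPow (n * r) := by
  induction n with
  | zero => rw [pow_zero, Nat.cast_zero, zero_mul, binomialPow, binomialSeries_zero, map_one]
  | succ n ih => rw [pow_succ, ih, ← binomialPow_add]; push_cast; ring_nf

theorem binomialPow_intCast_mul_pow (hu : 0 < u.orderTop) (p : ℤ) :
    u.binomialPow (p : 𝕜) * (1 + u) ^ (-p).toNat = (1 + u) ^ p.toNat := by
  rw [← binomialPow_natCast (𝕜 := 𝕜) hu, ← binomialPow_natCast (𝕜 := 𝕜) hu,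
    ← binomialPow_add]
  congr 1
  exact_mod_cast congrArg (Int.cast : ℤ → 𝕜) (by omega : p + (-p).toNat = p.toNat)

theorem coeff_binomialPow_zero (r : 𝕜) : (u.binomialPow r).coeff 0 = 1 := by
  rw [binomialPow, coeff_heval_zero, binomialSeries_constantCoeff (A := R) r]

theorem zero_le_orderTop_heval (hu : 0 < u.orderTop) (f : PowerSeries R) :
    0 ≤ (heval u f).orderTop := by
  refine le_orderTop_iff_forall.mpr fun j hj => ?_
  by_contra hne
  refine (WithTop.coe_lt_coe.mp hj).not_ge (SummableFamily.le_hsum_support_mem ?_ hne)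
  intro n g hg
  rw [SummableFamily.powerSeriesFamily_of_orderTop_pos hu, mem_support, coeff_smul] at hg
  have hpow : (u ^ n).orderTop ≤ g := orderTop_le_of_coeff_ne_zero (right_ne_zero_of_smul hg)
  exact WithTop.coe_le_coe.mp <|
    (nsmul_nonneg hu.le n).trans (orderTop_nsmul_le_orderTop_pow.trans hpow)

theorem order_binomialPow [Nontrivial R] (hu : 0 < u.orderTop) (r : 𝕜) :
    (u.binomialPow r).order = 0 := by
  have hcoeff := coeff_binomialPow_zero (u := u) r
  have hne : u.binomialPow r ≠ 0 := ne_zero_of_coeff_ne_zero (hcoeff ▸ one_ne_zero)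
  refine le_antisymm (order_le_of_coeff_ne_zero (hcoeff ▸ one_ne_zero)) ?_
  have hnonneg := zero_le_orderTop_heval hu (binomialSeries R r)
  exact (le_order_iff_forall hne).mpr fun j hj =>
    coeff_eq_zero_of_lt_orderTop ((WithTop.coe_lt_coe.mpr hj).trans_le hnonneg)

theorem isRatPow_binomialPow [Algebra ℚ R] (hu : 0 < u.orderTop) (p : ℤ) {q : ℕ} (hq : q ≠ 0) :
    IsRatPow (u.binomialPow (p / q : ℚ)) (1 + u) p q := by
  rw [IsRatPow, binomialPow_pow, mul_div_cancel₀ _ (Nat.cast_ne_zero.mpr hq),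
    binomialPow_intCast_mul_pow hu]

end BinomialPow

section Radical

variable {Γ R : Type*} [AddCommGroup Γ] [LinearOrder Γ] [IsOrderedAddMonoid Γ] [CommRing R]

theorem exists_eq_single_mul_one_add {x : R⟦Γ⟧} (hx : IsUnit x.leadingCoeff) :
    ∃ u : R⟦Γ⟧, 0 < u.orderTop ∧ x = single x.order x.leadingCoeff * (1 + u) := by
  obtain ⟨r, hr⟩ := hx.exists_left_inv
  refine ⟨single (-x.order) r * x - 1, ?_, ?_⟩
  · rw [← orderTop_neg, neg_sub]
    exact unit_aux x hr _ (neg_add_cancel _)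
  · rw [add_sub_cancel, ← mul_assoc, single_mul_single, add_neg_cancel,
      mul_comm x.leadingCoeff r, hr, single_zero_one, one_mul]

theorem exists_isRatPow_of_isRatPow_single [Nontrivial R] [Algebra ℚ R] {x : R⟦Γ⟧}
    (hx : IsUnit x.leadingCoeff) {p : ℤ} {q : ℕ} (hq : q ≠ 0) {g : Γ} {w : R}
    (hw : IsRegular w) (hroot : IsRatPow (single g w) (single x.order x.leadingCoeff) p q) :
    ∃ b : R⟦Γ⟧, IsRatPow b x p q ∧ b.order = g ∧ b.coeff g = w := by
  obtain ⟨u, hu, hxu⟩ := exists_eq_single_mul_one_add hx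
  set B := u.binomialPow (p / q : ℚ)
  have hB0 : B.coeff 0 = 1 := coeff_binomialPow_zero _
  refine ⟨single g w * B, hxu ▸ hroot.mul (isRatPow_binomialPow hu p hq), ?_, ?_⟩
  · rw [order_single_mul_of_isRegular hw, order_binomialPow hu, add_zero]
    exact ne_zero_of_coeff_ne_zero (hB0 ▸ one_ne_zero)
  · simpa only [zero_add, hB0, mul_one] using
      coeff_single_mul_add (r := w) (x := B) (a := 0) (b := g)

end Radical

end HahnSeries

section LaurentMonomial

open LaurentPolynomial

variable {K : Type*} [Field K]

theorem isRatPow_single_C_mul_T {c c' : K} (hc : c ≠ 0) {k l p : ℤ} {q : ℕ}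
    (hc' : c' ^ q = c ^ p) (hrl : (q : ℤ) ∣ p * l) (hrk : (q : ℤ) ∣ p * k) :
    IsRatPow (HahnSeries.single (-(p * k / q)) (C c' * T (p * l / q)))
      (HahnSeries.single (-k) (C c * T l)) p q := by
  have hPM : p.toNat - (-p).toNat = p := by omega
  have hcoeff : c' ^ q * c ^ (-p).toNat = c ^ p.toNat := by
    rw [hc', ← zpow_natCast, ← zpow_natCast, ← zpow_add₀ hc]
    congr 1
    omega
  simp only [IsRatPow, ← single_eq_C_mul_T, HahnSeries.single_pow, AddMonoidAlgebra.single_pow,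
    HahnSeries.single_mul_single, AddMonoidAlgebra.single_mul_single, hcoeff]
  congr 2 <;> push_cast [nsmul_eq_mul]
  · linear_combination k * hPM - Int.mul_ediv_cancel' hrk
  · linear_combination Int.mul_ediv_cancel' hrl - l * hPM

end LaurentMonomial

/-- `A` is modelled as `HahnSeries ℤ L`, the Hahn exponent `e` standing for `y ^ (-e)`. -/
theorem lemma_on_radical_general
    (a : HahnSeries ℤ (LaurentPolynomial ℂ)) (k l : ℤ) (c : ℂ) (hc : c ≠ 0)
    (hord : a.order = -k)
    (hlead : a.coeff (-k) = LaurentPolynomial.C c * LaurentPolynomial.T l)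
    (p : ℤ) (q : ℕ) (hq : 1 ≤ q)
    (hrl : (q : ℤ) ∣ p * l) (hrk : (q : ℤ) ∣ p * k) :
    ∃ (b : HahnSeries ℤ (LaurentPolynomial ℂ)) (c' : ℂ),
      b ^ q * a ^ ((-p).toNat) = a ^ (p.toNat) ∧
      c' ≠ 0 ∧ c' ^ (q : ℤ) = c ^ p ∧
      b.order = -(p * k / q) ∧
      b.coeff (-(p * k / q)) = LaurentPolynomial.C c' * LaurentPolynomial.T (p * l / q) := by
  have hlc : a.leadingCoeff = LaurentPolynomial.C c * LaurentPolynomial.T l := by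
    rw [HahnSeries.leadingCoeff_eq, hord, hlead]
  obtain ⟨c', hc'⟩ := IsAlgClosed.exists_pow_nat_eq (c ^ p) hq
  have hc'0 : c' ≠ 0 := by
    rintro rfl
    exact zpow_ne_zero p hc (by rw [← hc', zero_pow (by omega)])
  have hunit {d : ℂ} (hd : d ≠ 0) (n : ℤ) :
      IsUnit (LaurentPolynomial.C d * LaurentPolynomial.T n) :=
    (hd.isUnit.map LaurentPolynomial.C).mul (LaurentPolynomial.isUnit_T n)
  obtain ⟨b, hb, hbord, hbcoeff⟩ := HahnSeries.exists_isRatPow_of_isRatPow_single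
    (hlc ▸ hunit hc l) (by omega : q ≠ 0) (hunit hc'0 _).isRegular
    (by rw [hord, hlc]; exact isRatPow_single_C_mul_T hc hc' hrl hrk)
  exact ⟨b, c', hb, hc'0, by rwa [zpow_natCast], hbord, hbcoeff⟩

/-- **Lemma on radical.**  Let `L = ℂ[x, x⁻¹]` and let `A` be the algebra of asymptotic
series `a = Σ_{i ≤ k} a_i yⁱ` with coefficients `a_i ∈ L` and only finitely many
positive powers of `y`.  We model `A` as `HahnSeries ℤ L` where the Hahn-series
exponent `e` represents `y^(-e)` (so boundedness above of `y`-exponents becomes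
well-orderedness below), and `L` as `LaurentPolynomial ℂ`.  The leading term of a
nonzero `a` is `a.coeff a.order`, i.e. the term with the highest power of `y`.

Suppose `a ∈ A` has leading term `|a| = c x^l y^k` with `c ∈ ℂ*`, and let
`r = p/q ∈ ℚ` with `q ≥ 1` and `gcd(p,q) = 1` be such that `r·l ∈ ℤ` and `r·k ∈ ℤ`
(i.e. `|a|^r ∈ A`).  Then `a^r ∈ A`: there is `b ∈ A` with `b^q = a^p`
(formally `b^q · a^((-p)⁺) = a^(p⁺)`, to accommodate negative `p`) whose leading
term is `c' x^(rl) y^(rk)` for some `c' ∈ ℂ` with `c'^q = c^p`. -/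
theorem lemma_on_radical
    (a : HahnSeries ℤ (LaurentPolynomial ℂ)) (k l : ℤ) (c : ℂ) (hc : c ≠ 0)
    (hord : a.order = -k)
    (hlead : a.coeff (-k) = LaurentPolynomial.C c * LaurentPolynomial.T l)
    (p : ℤ) (q : ℕ) (hq : 1 ≤ q) (hcop : Int.gcd p (q : ℤ) = 1)
    (hrl : (q : ℤ) ∣ p * l) (hrk : (q : ℤ) ∣ p * k) :
    ∃ (b : HahnSeries ℤ (LaurentPolynomial ℂ)) (c' : ℂ),
      b ^ q * a ^ ((-p).toNat) = a ^ (p.toNat) ∧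
      c' ≠ 0 ∧ c' ^ (q : ℤ) = c ^ p ∧
      b.order = -(p * k / q) ∧
      b.coeff (-(p * k / q)) = LaurentPolynomial.C c' * LaurentPolynomial.T (p * l / q) :=
  lemma_on_radical_general a k l c hc hord hlead p q hq hrl hrk
end

section
/- Let w be a weight degree function on ℂ[x,y] determined by real weights w(x) = α and w(y) = β, and for a nonzero polynomial p let p_w denote its leading form (the sum of the monomials of p of maximal w-weight). If f, g ∈ ℂ[x,y] satisfy J(f,g) = 1, then either J(f_w, g_w) = 0 or J(f_w, g_w) = 1. -/
open MvPolynomial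

/-- The leading form of `p ∈ ℂ[x,y]` with respect to the weight degree function
determined by `w(x) = α`, `w(y) = β`: the sum of the monomials of `p` whose weight
`α·i + β·j` is maximal among the monomials in the support of `p`. -/
noncomputable def leadingForm (α β : ℝ) (p : MvPolynomial (Fin 2) ℂ) :
    MvPolynomial (Fin 2) ℂ :=
  ∑ d ∈ p.support,
    if (∀ e ∈ p.support, α * e 0 + β * e 1 ≤ α * d 0 + β * d 1) then
      monomial d (coeff d p)
    else 0

namespace JacAux

/-- weight of an exponent vector -/
noncomputable def wt (α β : ℝ) (d : Fin 2 →₀ ℕ) : ℝ := α * d 0 + β * d 1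

lemma wt_add (α β : ℝ) (a b : Fin 2 →₀ ℕ) : wt α β (a + b) = wt α β a + wt α β b := by
  simp only [wt, Finsupp.add_apply]
  push_cast
  ring

lemma wt_zero (α β : ℝ) : wt α β 0 = 0 := by simp [wt]

lemma wt_single0 (α β : ℝ) : wt α β (Finsupp.single (0 : Fin 2) 1) = α := by
  simp [wt, Finsupp.single_apply]

lemma wt_single1 (α β : ℝ) : wt α β (Finsupp.single (1 : Fin 2) 1) = β := by
  simp [wt, Finsupp.single_apply]

/-- all monomials have weight exactly m -/
def Hom (α β m : ℝ) (p : MvPolynomial (Fin 2) ℂ) : Prop :=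
  ∀ d, coeff d p ≠ 0 → wt α β d = m

/-- all monomials have weight < m -/
def Lt (α β m : ℝ) (p : MvPolynomial (Fin 2) ℂ) : Prop :=
  ∀ d, coeff d p ≠ 0 → wt α β d < m

/-- all monomials have weight ≤ m -/
def Le (α β m : ℝ) (p : MvPolynomial (Fin 2) ℂ) : Prop :=
  ∀ d, coeff d p ≠ 0 → wt α β d ≤ m

lemma Hom.le {α β m p} (h : Hom α β m p) : Le α β m p := fun d hd => (h d hd).le
lemma Lt.le {α β m p} (h : Lt α β m p) : Le α β m p := fun d hd => (h d hd).le

lemma Hom.congr {α β m m' p} (h : Hom α β m p) (e : m = m') : Hom α β m' p := e ▸ h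
lemma Lt.congr {α β m m' p} (h : Lt α β m p) (e : m = m') : Lt α β m' p := e ▸ h

lemma Lt.add {α β m p q} (hp : Lt α β m p) (hq : Lt α β m q) : Lt α β m (p + q) := by
  intro d hd
  rw [coeff_add] at hd
  rcases (by by_contra h; push_neg at h; simp [h.1, h.2] at hd :
      coeff d p ≠ 0 ∨ coeff d q ≠ 0) with h | h
  · exact hp d h
  · exact hq d h

lemma Lt.neg {α β m p} (hp : Lt α β m p) : Lt α β m (-p) := by
  intro d hd
  rw [coeff_neg, neg_ne_zero] at hd
  exact hp d hd

lemma Lt.sub {α β m p q} (hp : Lt α β m p) (hq : Lt α β m q) : Lt α β m (p - q) := by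
  rw [sub_eq_add_neg]; exact hp.add hq.neg

lemma mul_decomp {p q : MvPolynomial (Fin 2) ℂ} {d} (hd : coeff d (p * q) ≠ 0) :
    ∃ u v, coeff u p ≠ 0 ∧ coeff v q ≠ 0 ∧ u + v = d := by
  classical
  have hmem : d ∈ (p * q).support := by rwa [MvPolynomial.mem_support_iff]
  have := MvPolynomial.support_mul p q hmem
  rw [Finset.mem_add] at this
  obtain ⟨u, hu, v, hv, huv⟩ := this
  exact ⟨u, v, MvPolynomial.mem_support_iff.mp hu, MvPolynomial.mem_support_iff.mp hv, huv⟩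

lemma Le.mul_lt {α β a b p q} (hp : Le α β a p) (hq : Lt α β b q) :
    Lt α β (a + b) (p * q) := by
  intro d hd
  obtain ⟨u, v, hu, hv, rfl⟩ := mul_decomp hd
  rw [wt_add]
  exact add_lt_add_of_le_of_lt (hp u hu) (hq v hv)

lemma Lt.mul_le {α β a b p q} (hp : Lt α β a p) (hq : Le α β b q) :
    Lt α β (a + b) (p * q) := by
  intro d hd
  obtain ⟨u, v, hu, hv, rfl⟩ := mul_decomp hd
  rw [wt_add]
  exact add_lt_add_of_lt_of_le (hp u hu) (hq v hv)

lemma Hom.mul {α β a b p q} (hp : Hom α β a p) (hq : Hom α β b q) :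
    Hom α β (a + b) (p * q) := by
  intro d hd
  obtain ⟨u, v, hu, hv, rfl⟩ := mul_decomp hd
  rw [wt_add, hp u hu, hq v hv]

lemma Hom.sub {α β m p q} (hp : Hom α β m p) (hq : Hom α β m q) : Hom α β m (p - q) := by
  intro d hd
  rw [coeff_sub] at hd
  rcases (by by_contra h; push_neg at h; simp [h.1, h.2] at hd :
      coeff d p ≠ 0 ∨ coeff d q ≠ 0) with h | h
  · exact hp d h
  · exact hq d h

lemma coeff_pderiv_ne_zero {p : MvPolynomial (Fin 2) ℂ} {i : Fin 2} {e}
    (h : coeff e (pderiv i p) ≠ 0) : coeff (e + Finsupp.single i 1) p ≠ 0 := by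
  classical
  have hrep : pderiv i p
      = ∑ d ∈ p.support, monomial (d - Finsupp.single i 1) (coeff d p * (d i : ℂ)) := by
    conv_lhs => rw [p.as_sum]
    rw [map_sum]
    exact Finset.sum_congr rfl fun d _ => pderiv_monomial
  rw [hrep, coeff_sum] at h
  obtain ⟨d, hd, hne⟩ := Finset.exists_ne_zero_of_sum_ne_zero h
  rw [coeff_monomial] at hne
  split at hne
  · rename_i heq
    have hdi : d i ≠ 0 := by
      intro h0; simp [h0] at hne
    have hle : Finsupp.single i 1 ≤ d := by
      rw [Finsupp.single_le_iff]
      omega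
    have : e + Finsupp.single i 1 = d := by
      rw [← heq, tsub_add_cancel_of_le hle]
    rw [this]
    intro h0; simp [h0] at hne
  · exact absurd rfl hne

lemma Hom.pderiv {α β m p} (h : Hom α β m p) (i : Fin 2) :
    Hom α β (m - wt α β (Finsupp.single i 1)) (pderiv i p) := by
  intro e he
  have := h _ (coeff_pderiv_ne_zero he)
  rw [wt_add] at this
  linarith

lemma Lt.pderiv {α β m p} (h : Lt α β m p) (i : Fin 2) :
    Lt α β (m - wt α β (Finsupp.single i 1)) (pderiv i p) := by
  intro e he
  have := h _ (coeff_pderiv_ne_zero he)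
  rw [wt_add] at this
  linarith

lemma coeff_leadingForm (α β : ℝ) (p : MvPolynomial (Fin 2) ℂ) (e : Fin 2 →₀ ℕ) :
    coeff e (leadingForm α β p) =
      if (∀ e' ∈ p.support, wt α β e' ≤ wt α β e) then coeff e p else 0 := by
  classical
  rw [leadingForm, coeff_sum]
  have hterm : ∀ d ∈ p.support,
      coeff e (if (∀ e' ∈ p.support, α * e' 0 + β * e' 1 ≤ α * d 0 + β * d 1) then
          monomial d (coeff d p) else 0)
        = if d = e then (if (∀ e' ∈ p.support, wt α β e' ≤ wt α β d) then coeff d p else 0)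
          else 0 := by
    intro d _
    simp only [wt, apply_ite (coeff e), coeff_monomial, coeff_zero]
    by_cases hde : d = e <;> by_cases hc : (∀ e' ∈ p.support, α * e' 0 + β * e' 1 ≤ α * d 0 + β * d 1) <;>
      simp [hde, hc]
  rw [Finset.sum_congr rfl hterm, Finset.sum_ite_eq' p.support e]
  by_cases hmem : e ∈ p.support
  · simp [hmem]
  · simp only [hmem, if_false]
    rw [MvPolynomial.notMem_support_iff] at hmem
    simp [hmem]

lemma hom_leadingForm (α β : ℝ) {p : MvPolynomial (Fin 2) ℂ} (hp : p ≠ 0) :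
    Hom α β (p.support.sup' (MvPolynomial.support_nonempty.mpr hp) (wt α β))
      (leadingForm α β p) := by
  intro d hd
  rw [coeff_leadingForm] at hd
  split at hd
  · rename_i hcond
    have hdmem : d ∈ p.support := MvPolynomial.mem_support_iff.mpr hd
    refine le_antisymm (Finset.le_sup' _ hdmem) ?_
    obtain ⟨e, he, hMe⟩ :=
      Finset.exists_mem_eq_sup' (MvPolynomial.support_nonempty.mpr hp) (wt α β)
    rw [hMe]
    exact hcond e he
  · exact absurd rfl hd

lemma lt_rest (α β : ℝ) {p : MvPolynomial (Fin 2) ℂ} (hp : p ≠ 0) :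
    Lt α β (p.support.sup' (MvPolynomial.support_nonempty.mpr hp) (wt α β))
      (p - leadingForm α β p) := by
  intro d hd
  rw [coeff_sub, coeff_leadingForm] at hd
  split at hd
  · simp at hd
  · rename_i hcond
    push_neg at hcond
    obtain ⟨e, he, hlt⟩ := hcond
    exact lt_of_lt_of_le hlt (Finset.le_sup' _ he)

end JacAux

open JacAux in
/-- Let `w` be a weight degree function on `ℂ[x,y]` determined by real weights
`w(x) = α` and `w(y) = β`, and let `p_w` denote the leading form of a polynomial `p`.
If `f, g ∈ ℂ[x,y]` satisfy `J(f,g) = 1`, then either `J(f_w, g_w) = 0` or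
`J(f_w, g_w) = 1`. -/
theorem jacobian_of_leading_forms (α β : ℝ) (f g : MvPolynomial (Fin 2) ℂ)
    (hJ : pderiv (0 : Fin 2) f * pderiv (1 : Fin 2) g
        - pderiv (1 : Fin 2) f * pderiv (0 : Fin 2) g = 1) :
    pderiv (0 : Fin 2) (leadingForm α β f) * pderiv (1 : Fin 2) (leadingForm α β g)
      - pderiv (1 : Fin 2) (leadingForm α β f) * pderiv (0 : Fin 2) (leadingForm α β g) = 0 ∨
    pderiv (0 : Fin 2) (leadingForm α β f) * pderiv (1 : Fin 2) (leadingForm α β g)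
      - pderiv (1 : Fin 2) (leadingForm α β f) * pderiv (0 : Fin 2) (leadingForm α β g) = 1 := by
  classical
  have hf : f ≠ 0 := by rintro rfl; simp at hJ
  have hg : g ≠ 0 := by rintro rfl; simp at hJ
  set F := leadingForm α β f with hF
  set G := leadingForm α β g with hG
  set Mf := f.support.sup' (MvPolynomial.support_nonempty.mpr hf) (wt α β) with hMf
  set Mg := g.support.sup' (MvPolynomial.support_nonempty.mpr hg) (wt α β) with hMg
  set W : ℝ := Mf - α + (Mg - β) with hW
  have homF : Hom α β Mf F := hom_leadingForm α β hf
  have homG : Hom α β Mg G := hom_leadingForm α β hg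
  have ltf : Lt α β Mf (f - F) := lt_rest α β hf
  have ltg : Lt α β Mg (g - G) := lt_rest α β hg
  -- leading jacobian
  set J' := pderiv (0 : Fin 2) F * pderiv (1 : Fin 2) G
      - pderiv (1 : Fin 2) F * pderiv (0 : Fin 2) G with hJ'
  have homJ : Hom α β W J' := by
    have h1 : Hom α β (Mf - α + (Mg - β)) (pderiv (0 : Fin 2) F * pderiv (1 : Fin 2) G) := by
      have := ((homF.pderiv 0).congr (by rw [wt_single0])).mul
        ((homG.pderiv 1).congr (by rw [wt_single1]))
      exact this
    have h2 : Hom α β (Mf - α + (Mg - β)) (pderiv (1 : Fin 2) F * pderiv (0 : Fin 2) G) := by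
      have := ((homF.pderiv 1).congr (by rw [wt_single1])).mul
        ((homG.pderiv 0).congr (by rw [wt_single0]))
      exact this.congr (by ring)
    exact h1.sub h2
  -- error term
  set E := pderiv (0 : Fin 2) F * pderiv (1 : Fin 2) (g - G)
      + pderiv (0 : Fin 2) (f - F) * pderiv (1 : Fin 2) g
      - (pderiv (1 : Fin 2) F * pderiv (0 : Fin 2) (g - G)
        + pderiv (1 : Fin 2) (f - F) * pderiv (0 : Fin 2) g) with hE
  have ltE : Lt α β W E := by
    have lg : Le α β Mg g := by
      intro d hd
      exact Finset.le_sup' _ (MvPolynomial.mem_support_iff.mpr hd)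
    have t1 : Lt α β W (pderiv (0 : Fin 2) F * pderiv (1 : Fin 2) (g - G)) :=
      ((homF.pderiv 0).congr (by rw [wt_single0])).le.mul_lt
        ((ltg.pderiv 1).congr (by rw [wt_single1]))
    have lg1 : Le α β (Mg - β) (pderiv (1 : Fin 2) g) := fun d hd => by
      have := lg _ (coeff_pderiv_ne_zero hd)
      rw [wt_add, wt_single1] at this
      linarith
    have lg0 : Le α β (Mg - α) (pderiv (0 : Fin 2) g) := fun d hd => by
      have := lg _ (coeff_pderiv_ne_zero hd)
      rw [wt_add, wt_single0] at this
      linarith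
    have t2 : Lt α β W (pderiv (0 : Fin 2) (f - F) * pderiv (1 : Fin 2) g) :=
      ((ltf.pderiv 0).congr (by rw [wt_single0])).mul_le lg1
    have t3 : Lt α β W (pderiv (1 : Fin 2) F * pderiv (0 : Fin 2) (g - G)) :=
      (((homF.pderiv 1).congr (by rw [wt_single1])).le.mul_lt
        ((ltg.pderiv 0).congr (by rw [wt_single0]))).congr (by ring)
    have t4 : Lt α β W (pderiv (1 : Fin 2) (f - F) * pderiv (0 : Fin 2) g) :=
      (((ltf.pderiv 1).congr (by rw [wt_single1])).mul_le lg0).congr (by ring)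
    exact (t1.add t2).sub (t3.add t4)
  have hid : (1 : MvPolynomial (Fin 2) ℂ) - J' = E := by
    rw [hE, hJ']
    simp only [map_sub]
    linear_combination -hJ
  have key : ∀ d, coeff d J' = if wt α β d = W then coeff d (1 : MvPolynomial (Fin 2) ℂ)
      else 0 := by
    intro d
    by_cases hw : wt α β d = W
    · rw [if_pos hw]
      have hEd : coeff d E = 0 := by
        by_contra h
        exact absurd (ltE d h) (by rw [hw]; exact lt_irrefl _)
      have := congrArg (coeff d) hid
      rw [coeff_sub, hEd] at this
      exact (sub_eq_zero.mp this).symm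
    · rw [if_neg hw]
      by_contra h
      exact hw (homJ d h)
  by_cases hW0 : W = 0
  · right
    apply MvPolynomial.ext
    intro d
    rw [key d]
    by_cases hw : wt α β d = W
    · rw [if_pos hw]
    · rw [if_neg hw]
      have hd0 : d ≠ 0 := by
        rintro rfl
        exact hw (by rw [wt_zero, hW0])
      rw [MvPolynomial.coeff_one, if_neg (by exact fun h => hd0 h.symm)]
  · left
    apply MvPolynomial.ext
    intro d
    rw [key d, coeff_zero]
    by_cases hw : wt α β d = W
    · rw [if_pos hw]
      have hd0 : d ≠ 0 := by
        rintro rfl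
        exact hW0 (by rw [← hw, wt_zero])
      rw [MvPolynomial.coeff_one, if_neg (by exact fun h => hd0 h.symm)]
    · rw [if_neg hw]
end

section
/- Let w be a weight degree function on ℂ[x,y] with w(x) = α, w(y) = β. Let p, q ∈ ℂ[x,y] be nonzero w-homogeneous polynomials with deg_w(p) ≠ 0 and J(p,q) = 0. Then q is proportional to a rational power of p: there exist an integer s ≥ 1, an integer t ≥ 0 and a constant c ∈ ℂ* such that q^s = c·p^t. -/
/-!
Euler's identity for the weight `w` together with `J(p, q) = 0` gives
`Wp • p ∂ᵢq = Wq • q ∂ᵢp` for both variables. For a prime `f`, some `∂ᵢf` is not divisible by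
`f`, and comparing the orders of vanishing along `f` on both sides yields
`Wp ν_f(q) = Wq ν_f(p)`. So the exponent vectors of `q` and `p` are proportional; as `Wp ≠ 0`
forces `p` to be nonconstant, a prime `f₀ ∣ p` gives `s = ν_{f₀}(p) ≥ 1` and `t = ν_{f₀}(q)`
with `q ^ s` and `p ^ t` associated, and the units of `ℂ[x, y]` are the nonzero constants.
-/

open MvPolynomial

theorem Derivation.mul_apply_pow_mul {R A : Type*} [CommSemiring R] [CommSemiring A]
    [Algebra R A] (D : Derivation R A A) (f u : A) (n : ℕ) :
    f * D (f ^ n * u) = f ^ n * (n * (D f * u) + f * D u) := by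
  rw [D.leibniz, D.leibniz_pow]
  cases n with
  | zero => simp
  | succ k => simp only [smul_eq_mul, nsmul_eq_mul, Nat.add_sub_cancel]; push_cast; ring

theorem Prime.mul_multiplicity_eq_of_smul_mul_derivation_eq {K A : Type*} [Field K] [CommRing A]
    [IsDomain A] [WfDvdMonoid A] [Algebra K A] (D : Derivation K A A) {f P Q : A}
    (hf : Prime f) (hDf : ¬ f ∣ D f) (hP : P ≠ 0) (hQ : Q ≠ 0) {a b : K}
    (h : a • (P * D Q) = b • (Q * D P)) :
    a * multiplicity f Q = b * multiplicity f P := by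
  obtain ⟨u, hPu, hu⟩ := (FiniteMultiplicity.of_prime_left hf hP).exists_eq_pow_mul_and_not_dvd
  obtain ⟨v, hQv, hv⟩ := (FiniteMultiplicity.of_prime_left hf hQ).exists_eq_pow_mul_and_not_dvd
  set m := multiplicity f P
  set n := multiplicity f Q
  rw [Algebra.smul_def, Algebra.smul_def, hPu, hQv] at h
  have hu' := D.mul_apply_pow_mul f u m
  have hv' := D.mul_apply_pow_mul f v n
  -- `h` with the common factor `f ^ (m + n - 1)` removed
  have hcancel : algebraMap K A a * (u * (n * (D f * v) + f * D v))
      = algebraMap K A b * (v * (m * (D f * u) + f * D u)) := by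
    refine mul_left_cancel₀ (pow_ne_zero (m + n + 1) hf.ne_zero) ?_
    linear_combination (f * f) * h - (algebraMap K A a * (f ^ m * u) * f) * hv'
      + (algebraMap K A b * (f ^ n * v) * f) * hu'
  have hdvd : f ∣ algebraMap K A (a * n - b * m) * (D f * (u * v)) :=
    ⟨algebraMap K A b * (v * D u) - algebraMap K A a * (u * D v), by
      simp only [map_sub, map_mul, map_natCast]; linear_combination hcancel⟩
  by_contra hne
  have hunit : IsUnit (algebraMap K A (a * n - b * m)) :=
    (Ne.isUnit (sub_ne_zero.mpr hne)).map _
  rw [hunit.dvd_mul_left] at hdvd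
  simp [hf.dvd_mul, hDf, hu, hv] at hdvd

namespace UniqueFactorizationMonoid

variable {M : Type*} [CommMonoidWithZero M] [UniqueFactorizationMonoid M]

theorem associated_of_forall_emultiplicity_eq {a b : M} (ha : a ≠ 0) (hb : b ≠ 0)
    (h : ∀ p, Prime p → emultiplicity p a = emultiplicity p b) : Associated a b :=
  associated_of_dvd_dvd ((dvd_iff_emultiplicity_le ha).2 fun p hp => (h p hp).le)
    ((dvd_iff_emultiplicity_le hb).2 fun p hp => (h p hp).ge)

theorem exists_associated_pow_pow_of_mul_multiplicity_eq {K : Type*} [Field K] [CharZero K]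
    {P Q : M} (hP : P ≠ 0) (hQ : Q ≠ 0) (hPu : ¬ IsUnit P) {a b : K} (ha : a ≠ 0)
    (h : ∀ f, Prime f → a * multiplicity f Q = b * multiplicity f P) :
    ∃ s t : ℕ, 1 ≤ s ∧ Associated (Q ^ s) (P ^ t) := by
  obtain ⟨f₀, hf₀, hf₀P⟩ := WfDvdMonoid.exists_irreducible_factor hPu hP
  set s := multiplicity f₀ P
  set t := multiplicity f₀ Q
  have hprop (f : M) (hf : Prime f) : s * multiplicity f Q = t * multiplicity f P := by
    have : a * (s * multiplicity f Q : K) = a * (t * multiplicity f P) := by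
      linear_combination (s : K) * h f hf - (multiplicity f P : K) * h f₀ hf₀.prime
    exact_mod_cast mul_left_cancel₀ ha this
  refine ⟨s, t, multiplicity_pos_of_dvd hf₀P, ?_⟩
  refine associated_of_forall_emultiplicity_eq (pow_ne_zero _ hQ) (pow_ne_zero _ hP) fun f hf => ?_
  rw [emultiplicity_pow hf, emultiplicity_pow hf,
    (FiniteMultiplicity.of_prime_left hf hQ).emultiplicity_eq_multiplicity,
    (FiniteMultiplicity.of_prime_left hf hP).emultiplicity_eq_multiplicity]
  exact_mod_cast hprop f hf

end UniqueFactorizationMonoid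

namespace MvPolynomial

variable {R σ : Type*}

theorem IsWeightedHomogeneous.sum_smul_X_mul_pderiv [CommSemiring R] [Fintype σ]
    {w : σ → R} {n : R} {φ : MvPolynomial σ R} (h : φ.IsWeightedHomogeneous w n) :
    ∑ i, w i • (X i * pderiv i φ) = n • φ := by
  conv_lhs => rw [φ.as_sum]
  conv_rhs => rw [φ.as_sum, Finset.smul_sum]
  simp only [map_sum, Finset.mul_sum, Finset.smul_sum]
  rw [Finset.sum_comm]
  refine Finset.sum_congr rfl fun d hd => ?_
  simp only [X_mul_pderiv_monomial, smul_comm (w _), ← smul_assoc, ← Finset.sum_smul]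
  rw [← h (mem_support_iff.mp hd), Finsupp.weight_apply, Finsupp.sum_fintype _ _ (by simp)]

theorem degreeOf_pderiv_lt [CommSemiring R] {i : σ} {f : MvPolynomial σ R}
    (h : pderiv i f ≠ 0) : degreeOf i (pderiv i f) < degreeOf i f := by
  have hlt : ∀ m ∈ (pderiv i f).support, m i < degreeOf i f := by
    intro m hm
    rw [mem_support_iff, coeff_pderiv] at hm
    simpa using monomial_le_degreeOf i (mem_support_iff.mpr (left_ne_zero_of_mul hm))
  obtain ⟨m, hm⟩ := support_nonempty.mpr h
  exact (degreeOf_lt_iff ((Nat.zero_le _).trans_lt (hlt m hm))).mpr hlt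

section NoZeroDivisors

variable [CommSemiring R] [NoZeroDivisors R]

theorem pderiv_eq_zero_of_dvd_pderiv {i : σ} {f : MvPolynomial σ R} (h : f ∣ pderiv i f) :
    pderiv i f = 0 := by
  by_contra hne
  obtain ⟨g, hg⟩ := h
  have hf0 : f ≠ 0 := by rintro rfl; simp_all
  have hg0 : g ≠ 0 := by rintro rfl; simp_all
  have := degreeOf_pderiv_lt hne
  rw [hg, degreeOf_mul_eq hf0 hg0] at this
  omega

theorem eq_C_of_forall_pderiv_eq_zero [CharZero R] {f : MvPolynomial σ R}
    (h : ∀ i, pderiv i f = 0) : f = C (coeff 0 f) := by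
  classical
  ext m
  rw [coeff_C]
  split_ifs with hm
  · rw [hm]
  obtain ⟨i, hi⟩ : ∃ i, m i ≠ 0 := by
    by_contra! hc
    exact hm (Finsupp.ext hc).symm
  have := coeff_pderiv (i := i) f (m - Finsupp.single i 1)
  rw [h, coeff_zero, Finsupp.sub_add_single_one_cancel hi, eq_comm, mul_eq_zero] at this
  exact this.resolve_right (Nat.cast_add_one_ne_zero _)

end NoZeroDivisors

theorem _root_.Prime.exists_not_dvd_pderiv {K : Type*} [Field K] [CharZero K]
    {f : MvPolynomial σ K} (hf : Prime f) : ∃ i, ¬ f ∣ pderiv i f := by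
  by_contra! h
  have hC := eq_C_of_forall_pderiv_eq_zero fun i => pderiv_eq_zero_of_dvd_pderiv (h i)
  have hc : coeff 0 f ≠ 0 := fun h0 => hf.ne_zero (by rw [hC, h0, C_0])
  exact hf.not_isUnit (hC ▸ (Ne.isUnit hc).map C)

theorem smul_mul_pderiv_eq_of_jacobian_eq_zero [CommRing R] {w : Fin 2 → R} {a b : R}
    {p q : MvPolynomial (Fin 2) R} (hp : p.IsWeightedHomogeneous w a)
    (hq : q.IsWeightedHomogeneous w b)
    (hJ : pderiv 0 p * pderiv 1 q - pderiv 1 p * pderiv 0 q = 0) (i : Fin 2) :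
    a • (p * pderiv i q) = b • (q * pderiv i p) := by
  have ep := hp.sum_smul_X_mul_pderiv
  have eq := hq.sum_smul_X_mul_pderiv
  simp only [Fin.sum_univ_two, smul_eq_C_mul] at ep eq ⊢
  match i with
  | 0 => linear_combination (-(pderiv 0 q)) * ep + pderiv 0 p * eq - (C (w 1) * X 1) * hJ
  | 1 => linear_combination (-(pderiv 1 q)) * ep + pderiv 1 p * eq + (C (w 0) * X 0) * hJ

theorem isWeightedHomogeneous_ofReal {α β W : ℝ} {p : MvPolynomial (Fin 2) ℂ}
    (h : ∀ d ∈ p.support, α * d 0 + β * d 1 = W) :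
    p.IsWeightedHomogeneous ![(α : ℂ), β] W := by
  intro d hd
  rw [Finsupp.weight_apply, Finsupp.sum_fintype _ _ (by simp), Fin.sum_univ_two]
  simpa [mul_comm] using congrArg ((↑) : ℝ → ℂ) (h d (mem_support_iff.mpr hd))

end MvPolynomial

/-- Let `w` be a weight degree function on `ℂ[x,y]` with `w(x) = α`, `w(y) = β`.
Let `p, q ∈ ℂ[x,y]` be nonzero `w`-homogeneous polynomials (of weights `Wp`, `Wq`)
with `deg_w(p) = Wp ≠ 0` and `J(p,q) = 0`.  Then `q` is proportional to a rational
power of `p`: there exist an integer `s ≥ 1`, an integer `t ≥ 0` and a constant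
`c ∈ ℂ*` such that `q^s = c·p^t`. -/
theorem homogeneous_jacobian_dependent (α β Wp Wq : ℝ)
    (p q : MvPolynomial (Fin 2) ℂ) (hp0 : p ≠ 0) (hq0 : q ≠ 0)
    (hp : ∀ d ∈ p.support, α * d 0 + β * d 1 = Wp)
    (hq : ∀ d ∈ q.support, α * d 0 + β * d 1 = Wq)
    (hWp : Wp ≠ 0)
    (hJ : pderiv (0 : Fin 2) p * pderiv (1 : Fin 2) q
        - pderiv (1 : Fin 2) p * pderiv (0 : Fin 2) q = 0) :
    ∃ (s t : ℕ) (c : ℂ), 1 ≤ s ∧ c ≠ 0 ∧ q ^ s = C c * p ^ t := by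
  have hpu : ¬ IsUnit p := by
    intro hu
    obtain ⟨c, hc, rfl⟩ := isUnit_iff_eq_C_of_isReduced.mp hu
    exact hWp (by simpa using (hp 0 (by simpa using hc.ne_zero)).symm)
  have hmult (f : MvPolynomial (Fin 2) ℂ) (hf : Prime f) :
      (Wp : ℂ) * multiplicity f q = Wq * multiplicity f p := by
    obtain ⟨i, hi⟩ := hf.exists_not_dvd_pderiv
    exact hf.mul_multiplicity_eq_of_smul_mul_derivation_eq (pderiv i) hi hp0 hq0
      (smul_mul_pderiv_eq_of_jacobian_eq_zero (isWeightedHomogeneous_ofReal hp)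
        (isWeightedHomogeneous_ofReal hq) hJ i)
  obtain ⟨s, t, hs, u, hu⟩ :=
    UniqueFactorizationMonoid.exists_associated_pow_pow_of_mul_multiplicity_eq
      hp0 hq0 hpu (Complex.ofReal_ne_zero.mpr hWp) hmult
  obtain ⟨c, hc, hcu⟩ := isUnit_iff_eq_C_of_isReduced.mp u.isUnit
  refine ⟨s, t, c⁻¹, hs, inv_ne_zero hc.ne_zero, ?_⟩
  rw [← hu, hcu, mul_comm, mul_assoc, ← C_mul, mul_inv_cancel₀ hc.ne_zero, C_1, mul_one]
end
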